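/- Let u : H_code → H_phys be a linear isometry between complex Hilbert spaces, let M_code, M_phys be von Neumann algebras on H_code, H_phys, and let Ψ, Φ ∈ H_code with Ψ cyclic with respect to M_code. Let S_c : H_code → H_code be a continuous conjugate-linear map satisfying S_c(OΨ) = O†Φ for all O ∈ M_code, and let S_p : H_phys → H_phys be a continuous conjugate-linear map satisfying S_p(P(uΨ)) = P†(uΦ) for all P ∈ M_phys. If the reconstruction property holds for (u, M_code, M_phys), then u(S_c x) = S_p(u x) for all x ∈ H_code. -/
import Mathlib


/-- A vector `ψ` is cyclic with respect to a set `M` of bounded operators if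
`{Oψ : O ∈ M}` is dense. -/
def IsCyclicVector {H : Type*} [NormedAddCommGroup H] [InnerProductSpace ℂ H]
    (M : Set (H →L[ℂ] H)) (ψ : H) : Prop :=
  Dense {x : H | ∃ O ∈ M, O ψ = x}

/-- The reconstruction property for `(u, M_code, M_phys)`. -/
def Reconstruction {H₁ H₂ : Type*}
    [NormedAddCommGroup H₁] [InnerProductSpace ℂ H₁] [CompleteSpace H₁]
    [NormedAddCommGroup H₂] [InnerProductSpace ℂ H₂] [CompleteSpace H₂]
    (u : H₁ →ₗᵢ[ℂ] H₂) (Mc : Set (H₁ →L[ℂ] H₁)) (Mp : Set (H₂ →L[ℂ] H₂)) : Prop :=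
  ∀ O ∈ Mc, ∃ Ot ∈ Mp, ∀ θ : H₁,
    u (O θ) = Ot (u θ) ∧
    u ((ContinuousLinearMap.adjoint O) θ) = (ContinuousLinearMap.adjoint Ot) (u θ)

/-- the (bounded) relative Tomita operators intertwine with the
bulk-to-boundary isometry: `u ∘ S_c = S_p ∘ u`. -/
theorem tomita_intertwines {H₁ H₂ : Type*}
    [NormedAddCommGroup H₁] [InnerProductSpace ℂ H₁] [CompleteSpace H₁]
    [NormedAddCommGroup H₂] [InnerProductSpace ℂ H₂] [CompleteSpace H₂]
    (u : H₁ →ₗᵢ[ℂ] H₂) (Mc : VonNeumannAlgebra H₁) (Mp : VonNeumannAlgebra H₂)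
    (Ψ Φ : H₁) (hΨ : IsCyclicVector (Mc : Set (H₁ →L[ℂ] H₁)) Ψ)
    (Sc : H₁ →L⋆[ℂ] H₁) (Sp : H₂ →L⋆[ℂ] H₂)
    (hSc : ∀ O ∈ Mc, Sc (O Ψ) = (ContinuousLinearMap.adjoint O) Φ)
    (hSp : ∀ P ∈ Mp, Sp (P (u Ψ)) = (ContinuousLinearMap.adjoint P) (u Φ))
    (hrec : Reconstruction u (Mc : Set (H₁ →L[ℂ] H₁)) (Mp : Set (H₂ →L[ℂ] H₂))) :
    ∀ x : H₁, u (Sc x) = Sp (u x) := by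
  have hE : IsClosed {x : H₁ | u (Sc x) = Sp (u x)} :=
    isClosed_eq (u.continuous.comp Sc.continuous) (Sp.continuous.comp u.continuous)
  have hsub : {x : H₁ | ∃ O ∈ (Mc : Set (H₁ →L[ℂ] H₁)), O Ψ = x} ⊆
      {x : H₁ | u (Sc x) = Sp (u x)} := by
    rintro x ⟨O, hO, rfl⟩
    obtain ⟨Ot, hOt, h⟩ := hrec O hO
    have h1 := (h Ψ).1
    have h2 := (h Φ).2
    simp only [Set.mem_setOf_eq, hSc O hO, h2, ← hSp Ot hOt, h1]
  intro x
  have : x ∈ closure {x : H₁ | ∃ O ∈ (Mc : Set (H₁ →L[ℂ] H₁)), O Ψ = x} := by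
    rw [hΨ.closure_eq]; trivial
  exact (closure_minimal hsub hE) this
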